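/- arXiv:2005.07361 — 2 statements merged into one kernel-verified Lean document; each statement's English description precedes it below -/
import Mathlib

section
/- Let 0 ≤ s < r < 1, u₀ = s/r, λ ∈ closure(𝔻), v₀ = λ, and define f(z) = z · T_{u₀}(λ · T_{-r}(z)) where T_a(z) = (z+a)/(1+conj(a)z). Then f is analytic on 𝔻, maps 𝔻 into 𝔻, f(0) = 0, f(r) = s, and f'(r) = s/r + ((r² - s²)/(r(1 - r²)))·λ. -/
/-!
`T_a` maps the disc into itself for `|a| < 1`, because
`|1 + ā z|² - |z + a|² = (1 - |a|²)(1 - |z|²)`. Hence `g = T_{u₀} ∘ (λ · T_{-r})` maps the disc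
into itself and `f(z) = z g(z)` does too. Since `T_{-r}(r) = 0` and `T_{u₀}(0) = u₀`, we get
`f(r) = r u₀ = s` and `f'(r) = g(r) + r g'(r) = u₀ + r (1 - u₀²) λ / (1 - r²)`.
-/

/-- The Möbius transformation `T_a(z) = (z+a)/(1 + conj a · z)`. -/
noncomputable def T (a z : ℂ) : ℂ := (z + a) / (1 + (starRingEnd ℂ) a * z)

open Complex Metric Set

lemma one_add_conj_mul_ne_zero {a z : ℂ} (h : ‖a‖ * ‖z‖ < 1) :
    1 + (starRingEnd ℂ) a * z ≠ 0 := by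
  intro hc
  have : ‖(starRingEnd ℂ) a * z‖ = 1 := by
    rw [show (starRingEnd ℂ) a * z = -1 by linear_combination hc, norm_neg, norm_one]
  rw [norm_mul, norm_conj] at this
  linarith

lemma normSq_one_add_conj_mul_sub_normSq_add (a z : ℂ) :
    normSq (1 + (starRingEnd ℂ) a * z) - normSq (z + a)
      = (1 - normSq a) * (1 - normSq z) := by
  simp only [normSq_apply, add_re, add_im, mul_re, mul_im, conj_re, conj_im, one_re, one_im]
  ring

lemma norm_T_lt_one {a z : ℂ} (ha : ‖a‖ < 1) (hz : ‖z‖ < 1) : ‖T a z‖ < 1 := by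
  have hden : 0 < ‖1 + (starRingEnd ℂ) a * z‖ :=
    norm_pos_iff.mpr (one_add_conj_mul_ne_zero (mul_lt_one_of_nonneg_of_lt_one_left
      (norm_nonneg a) ha hz.le))
  rw [T, norm_div, div_lt_one hden, ← sq_lt_sq₀ (norm_nonneg _) (norm_nonneg _),
    Complex.sq_norm, Complex.sq_norm]
  have hpos : 0 < (1 - normSq a) * (1 - normSq z) := by
    rw [← Complex.sq_norm, ← Complex.sq_norm]
    exact mul_pos (by nlinarith [norm_nonneg a]) (by nlinarith [norm_nonneg z])
  linarith [normSq_one_add_conj_mul_sub_normSq_add a z]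

lemma mapsTo_T_ball {a : ℂ} (ha : ‖a‖ < 1) : MapsTo (T a) (ball 0 1) (ball 0 1) := by
  intro z hz
  rw [mem_ball_zero_iff] at hz ⊢
  exact norm_T_lt_one ha hz

lemma hasDerivAt_T {a z : ℂ} (h : 1 + (starRingEnd ℂ) a * z ≠ 0) :
    HasDerivAt (T a) ((1 - normSq a) / (1 + (starRingEnd ℂ) a * z) ^ 2) z := by
  have hden : HasDerivAt (fun w => 1 + (starRingEnd ℂ) a * w) ((starRingEnd ℂ) a) z := by
    simpa using ((hasDerivAt_id z).const_mul ((starRingEnd ℂ) a)).const_add 1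
  have hnum : HasDerivAt (fun w => w + a) 1 z := (hasDerivAt_id' z).add_const a
  exact (hnum.div hden h).congr_deriv (by rw [← mul_conj]; ring)

lemma differentiableOn_T {a : ℂ} (ha : ‖a‖ < 1) : DifferentiableOn ℂ (T a) (ball 0 1) :=
  fun _ hz => (hasDerivAt_T (one_add_conj_mul_ne_zero (mul_lt_one_of_nonneg_of_lt_one_left
    (norm_nonneg a) ha (mem_ball_zero_iff.mp hz).le))).differentiableAt.differentiableWithinAt

@[simp]
lemma T_zero (a : ℂ) : T a 0 = a := by simp [T]

@[simp]
lemma T_neg_self (a : ℂ) : T (-a) a = 0 := by simp [T]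

lemma hasDerivAt_T_zero (a : ℂ) : HasDerivAt (T a) (1 - normSq a) 0 := by
  simpa using hasDerivAt_T (a := a) (z := 0) (by simp)

lemma hasDerivAt_T_neg_self {a : ℂ} (ha : normSq a ≠ 1) :
    HasDerivAt (T (-a)) (1 - normSq a)⁻¹ a := by
  have hden : 1 + (starRingEnd ℂ) (-a) * a = 1 - normSq a := by
    rw [map_neg, neg_mul, ← sub_eq_add_neg, mul_comm, mul_conj]
  have hne : (1 : ℂ) - normSq a ≠ 0 := sub_ne_zero.mpr (by exact_mod_cast ha.symm)
  convert hasDerivAt_T (hden ▸ hne) using 1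
  rw [hden, normSq_neg]
  field_simp

lemma mapsTo_const_mul_ball {c : ℂ} (hc : ‖c‖ ≤ 1) {h : ℂ → ℂ}
    (hh : MapsTo h (ball 0 1) (ball 0 1)) : MapsTo (fun z => c * h z) (ball 0 1) (ball 0 1) := by
  intro z hz
  have := mem_ball_zero_iff.mp (hh hz)
  rw [mem_ball_zero_iff, norm_mul]
  exact mul_lt_one_of_nonneg_of_lt_one_right hc (norm_nonneg _) this

lemma mapsTo_id_mul_ball {h : ℂ → ℂ} (hh : MapsTo h (ball 0 1) (ball 0 1)) :
    MapsTo (fun z => z * h z) (ball 0 1) (ball 0 1) := by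
  intro z hz
  have := mem_ball_zero_iff.mp (hh hz)
  rw [mem_ball_zero_iff] at hz ⊢
  rw [norm_mul]
  exact mul_lt_one_of_nonneg_of_lt_one_left (norm_nonneg z) hz this.le

/-- The extremal function `f(z) = z · T_{u₀}(λ · T_{-r}(z))` interpolates the data. -/
theorem extremal_case_one (r s : ℝ) (lam : ℂ)
    (hs : 0 ≤ s) (hsr : s < r) (hr : r < 1) (hlam : ‖lam‖ ≤ 1)
    (f : ℂ → ℂ)
    (hf : f = fun z => z * T ((s / r : ℝ) : ℂ) (lam * T (-(r : ℂ)) z)) :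
    DifferentiableOn ℂ f (Metric.ball (0:ℂ) 1) ∧
    Set.MapsTo f (Metric.ball (0:ℂ) 1) (Metric.ball (0:ℂ) 1) ∧
    f 0 = 0 ∧ f (r : ℂ) = (s : ℂ) ∧
    deriv f (r : ℂ) =
      (s / r : ℂ) + (((r ^ 2 - s ^ 2) / (r * (1 - r ^ 2)) : ℝ) : ℂ) * lam := by
  have hr0 : 0 < r := hs.trans_lt hsr
  have hu : ‖((s / r : ℝ) : ℂ)‖ < 1 := by
    rw [norm_real, Real.norm_of_nonneg (by positivity)]
    exact (div_lt_one hr0).2 hsr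
  have hr1 : ‖-(r : ℂ)‖ < 1 := by simpa [abs_of_pos hr0] using hr
  have hinner := mapsTo_const_mul_ball hlam (mapsTo_T_ball hr1)
  subst hf
  refine ⟨differentiableOn_id.mul ((differentiableOn_T hu).comp
      ((differentiableOn_T hr1).const_mul lam) hinner),
    mapsTo_id_mul_ball ((mapsTo_T_ball hu).comp hinner), by simp, ?_, ?_⟩
  · simp only [T_neg_self, mul_zero, T_zero, ← ofReal_mul]
    congr 1
    field_simp
  · have hnormSq : normSq (r : ℂ) ≠ 1 := by rw [normSq_ofReal]; nlinarith
    have hderiv : HasDerivAt (fun z => z * T ((s / r : ℝ) : ℂ) (lam * T (-(r : ℂ)) z)) _ r :=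
      (hasDerivAt_id' (r : ℂ)).mul ((hasDerivAt_T_zero _).comp_of_eq (r : ℂ)
        ((hasDerivAt_T_neg_self hnormSq).const_mul lam) (by simp))
    have hr' : (r : ℂ) ≠ 0 := ofReal_ne_zero.mpr hr0.ne'
    have hr2 : (1 : ℂ) - r ^ 2 ≠ 0 := by norm_cast; nlinarith
    rw [hderiv.deriv]
    simp only [T_neg_self, mul_zero, T_zero, normSq_ofReal]
    push_cast
    field_simp
end

section
/- Let g be analytic on 𝔻 with g(𝔻) ⊆ 𝔻, and z ∈ 𝔻. Define the Peschl invariant derivatives D₁g(z) = (1−|z|²)g'(z)/(1−|g(z)|²) and D₂g(z) = ((1−|z|²)²/(1−|g(z)|²))·[g''(z) − 2·conj(z)·g'(z)/(1−|z|²) + 2·conj(g(z))·g'(z)²/(1−|g(z)|²)]. Then |D₁g(z)| ≤ 1 and |D₂g(z)|/2 ≤ 1 − |D₁g(z)|². -/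
/-!
Pre- and post-composing `g` with disk automorphisms gives a self-map `H` of the disk with
`H 0 = 0` whose first two derivatives at `0` are exactly `D₁g(z)` and `D₂g(z)`. The first bound
is then the Schwarz lemma. For the second, `φ = dslope H 0` maps the disk into the closed disk,
with `φ 0 = H'(0)` and `φ'(0) = H''(0)/2`, so Schwarz–Pick at the origin,
`|φ'(0)| ≤ 1 - |φ(0)|²`, gives `|H''(0)|/2 ≤ 1 - |H'(0)|²`.
-/

open Complex ComplexConjugate Metric Set Filter Topology

section Mobius

noncomputable def diskMobius (a u : ℂ) : ℂ := (u - a) / (1 - conj a * u)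

theorem one_sub_conj_mul_self (a : ℂ) : 1 - conj a * a = ((1 - ‖a‖ ^ 2 : ℝ) : ℂ) := by
  rw [mul_comm, mul_conj, normSq_eq_norm_sq]; push_cast; ring

variable {a u : ℂ}

theorem one_sub_conj_mul_ne_zero (ha : ‖a‖ < 1) (hu : ‖u‖ < 1) : 1 - conj a * u ≠ 0 := by
  refine sub_ne_zero.mpr fun h => ?_
  have : ‖conj a * u‖ < 1 := by
    rw [norm_mul, norm_conj]; nlinarith [norm_nonneg a, norm_nonneg u]
  simp [← h] at this

theorem normSq_one_sub_conj_mul_sub_normSq_sub (a u : ℂ) :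
    normSq (1 - conj a * u) - normSq (u - a) = (1 - normSq a) * (1 - normSq u) := by
  simp only [normSq_apply, sub_re, sub_im, mul_re, mul_im, conj_re, conj_im, one_re, one_im]
  ring

theorem norm_diskMobius_lt_one (ha : ‖a‖ < 1) (hu : ‖u‖ < 1) :
    ‖diskMobius a u‖ < 1 := by
  have hpos : 0 < (1 - normSq a) * (1 - normSq u) := by
    rw [normSq_eq_norm_sq, normSq_eq_norm_sq]
    exact mul_pos (by nlinarith [norm_nonneg a]) (by nlinarith [norm_nonneg u])
  have hlt : normSq (u - a) < normSq (1 - conj a * u) := by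
    linarith [normSq_one_sub_conj_mul_sub_normSq_sub a u]
  rw [diskMobius, norm_div, div_lt_one (norm_pos_iff.mpr (one_sub_conj_mul_ne_zero ha hu))]
  simpa only [normSq_eq_norm_sq, sq_lt_sq, abs_norm] using hlt

theorem mapsTo_diskMobius (ha : ‖a‖ < 1) : MapsTo (diskMobius a) (ball 0 1) (ball 0 1) :=
  fun _ hu => mem_ball_zero_iff.mpr (norm_diskMobius_lt_one ha (mem_ball_zero_iff.mp hu))

@[simp] theorem diskMobius_self (a : ℂ) : diskMobius a a = 0 := by simp [diskMobius]

@[simp] theorem diskMobius_neg_zero (a : ℂ) : diskMobius (-a) 0 = a := by simp [diskMobius]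

theorem hasDerivAt_diskMobius (h : 1 - conj a * u ≠ 0) :
    HasDerivAt (diskMobius a) ((1 - conj a * a) / (1 - conj a * u) ^ 2) u :=
  (((hasDerivAt_id' u).sub_const a).fun_div
    (((hasDerivAt_id' u).const_mul (conj a)).const_sub 1) h).congr_deriv (by ring)

theorem analyticAt_diskMobius (h : 1 - conj a * u ≠ 0) : AnalyticAt ℂ (diskMobius a) u :=
  (analyticAt_id.sub analyticAt_const).div
    (analyticAt_const.sub (analyticAt_const.mul analyticAt_id)) h

theorem iteratedDeriv_two_diskMobius (h : 1 - conj a * u ≠ 0) :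
    iteratedDeriv 2 (diskMobius a) u = 2 * conj a * (1 - conj a * a) / (1 - conj a * u) ^ 3 := by
  have hne : ∀ᶠ v in 𝓝 u, 1 - conj a * v ≠ 0 :=
    (continuous_const.sub (continuous_const.mul continuous_id)).continuousAt.eventually_ne h
  have hderiv :
      deriv (diskMobius a) =ᶠ[𝓝 u] fun v => (1 - conj a * a) / (1 - conj a * v) ^ 2 :=
    hne.mono fun v hv => (hasDerivAt_diskMobius hv).deriv
  rw [iteratedDeriv_succ, iteratedDeriv_one, hderiv.deriv_eq]
  refine ((hasDerivAt_const u (1 - conj a * a)).fun_div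
    ((((hasDerivAt_id' u).const_mul (conj a)).const_sub 1).fun_pow 2)
      (pow_ne_zero 2 h)).deriv.trans ?_
  field_simp
  ring

theorem differentiableOn_diskMobius (ha : ‖a‖ < 1) :
    DifferentiableOn ℂ (diskMobius a) (ball 0 1) := fun _ hu =>
  (analyticAt_diskMobius (one_sub_conj_mul_ne_zero ha (mem_ball_zero_iff.mp hu)))
    |>.differentiableAt.differentiableWithinAt

end Mobius

section Composition

variable {G : ℂ → ℂ} {x w : ℂ}

theorem deriv_comp_diskMobius_neg_zero (hG : DifferentiableAt ℂ G w) :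
    deriv (G ∘ diskMobius (-w)) 0 = deriv G w * (1 - conj w * w) := by
  have hσ := hasDerivAt_diskMobius (a := -w) (u := 0) (by simp)
  rw [← diskMobius_neg_zero w] at hG
  rw [deriv_comp _ hG hσ.differentiableAt, hσ.deriv, diskMobius_neg_zero]
  simp

theorem iteratedDeriv_two_comp_diskMobius_neg_zero (hG : ContDiffAt ℂ 2 G w) :
    iteratedDeriv 2 (G ∘ diskMobius (-w)) 0 =
      iteratedDeriv 2 G w * (1 - conj w * w) ^ 2 - 2 * conj w * (1 - conj w * w) * deriv G w := by
  have hσ : 1 - conj (-w) * 0 ≠ 0 := by simp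
  rw [← diskMobius_neg_zero w] at hG
  rw [iteratedDeriv_comp_two hG (analyticAt_diskMobius hσ).contDiffAt,
    (hasDerivAt_diskMobius hσ).deriv, iteratedDeriv_two_diskMobius hσ, diskMobius_neg_zero]
  simp only [map_neg, mul_zero, sub_zero, one_pow, div_one, neg_mul_neg]
  ring

theorem deriv_diskMobius_comp (hG : DifferentiableAt ℂ G x) (hx : G x = w) (hw : ‖w‖ < 1) :
    deriv (diskMobius w ∘ G) x = deriv G x / (1 - conj w * w) := by
  have hτ := hasDerivAt_diskMobius (one_sub_conj_mul_ne_zero hw hw)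
  rw [← hx] at hτ ⊢
  rw [deriv_comp _ hτ.differentiableAt hG, hτ.deriv]
  field_simp

theorem iteratedDeriv_two_diskMobius_comp (hG : ContDiffAt ℂ 2 G x) (hx : G x = w)
    (hw : ‖w‖ < 1) :
    iteratedDeriv 2 (diskMobius w ∘ G) x =
      2 * conj w * deriv G x ^ 2 / (1 - conj w * w) ^ 2
        + iteratedDeriv 2 G x / (1 - conj w * w) := by
  have hτ := one_sub_conj_mul_ne_zero hw hw
  rw [← hx] at hτ ⊢
  rw [iteratedDeriv_comp_two (analyticAt_diskMobius hτ).contDiffAt hG,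
    (hasDerivAt_diskMobius hτ).deriv, iteratedDeriv_two_diskMobius hτ]
  field_simp

end Composition

noncomputable def diskRecenter (g : ℂ → ℂ) (z : ℂ) : ℂ → ℂ :=
  diskMobius (g z) ∘ g ∘ diskMobius (-z)

section Recenter

variable {g : ℂ → ℂ} {z : ℂ}

@[simp] theorem diskRecenter_zero : diskRecenter g z 0 = 0 := by simp [diskRecenter]

theorem mapsTo_diskRecenter (hmap : MapsTo g (ball 0 1) (ball 0 1)) (hz : ‖z‖ < 1) :
    MapsTo (diskRecenter g z) (ball 0 1) (ball 0 1) := by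
  have hw : ‖g z‖ < 1 := mem_ball_zero_iff.mp (hmap (mem_ball_zero_iff.mpr hz))
  exact (mapsTo_diskMobius hw).comp (hmap.comp (mapsTo_diskMobius (by rwa [norm_neg])))

theorem differentiableOn_diskRecenter (hg : DifferentiableOn ℂ g (ball 0 1))
    (hmap : MapsTo g (ball 0 1) (ball 0 1)) (hz : ‖z‖ < 1) :
    DifferentiableOn ℂ (diskRecenter g z) (ball 0 1) := by
  have hw : ‖g z‖ < 1 := mem_ball_zero_iff.mp (hmap (mem_ball_zero_iff.mpr hz))
  have hz' : ‖-z‖ < 1 := by rwa [norm_neg]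
  exact (differentiableOn_diskMobius hw).comp
    (hg.comp (differentiableOn_diskMobius hz') (mapsTo_diskMobius hz'))
    (hmap.comp (mapsTo_diskMobius hz'))

theorem deriv_diskRecenter_zero (hg : DifferentiableAt ℂ g z) (hw : ‖g z‖ < 1) :
    deriv (diskRecenter g z) 0 =
      ((1 - ‖z‖ ^ 2 : ℝ) : ℂ) * deriv g z / ((1 - ‖g z‖ ^ 2 : ℝ) : ℂ) := by
  have hσ : DifferentiableAt ℂ (diskMobius (-z)) 0 :=
    (analyticAt_diskMobius (by simp)).differentiableAt
  have hgσ : DifferentiableAt ℂ (g ∘ diskMobius (-z)) 0 :=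
    DifferentiableAt.comp (g := g) 0 (by rwa [diskMobius_neg_zero]) hσ
  rw [diskRecenter, deriv_diskMobius_comp hgσ (by simp) hw,
    deriv_comp_diskMobius_neg_zero hg, one_sub_conj_mul_self, one_sub_conj_mul_self, mul_comm]

theorem iteratedDeriv_two_diskRecenter_zero (hg : ContDiffAt ℂ 2 g z) (hz : ‖z‖ < 1)
    (hw : ‖g z‖ < 1) :
    iteratedDeriv 2 (diskRecenter g z) 0 =
      (((1 - ‖z‖ ^ 2) ^ 2 : ℝ) : ℂ) / ((1 - ‖g z‖ ^ 2 : ℝ) : ℂ) *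
        (iteratedDeriv 2 g z
          - 2 * conj z * deriv g z / ((1 - ‖z‖ ^ 2 : ℝ) : ℂ)
          + 2 * conj (g z) * (deriv g z) ^ 2 / ((1 - ‖g z‖ ^ 2 : ℝ) : ℂ)) := by
  have hσ : ContDiffAt ℂ 2 (diskMobius (-z)) 0 := (analyticAt_diskMobius (by simp)).contDiffAt
  have hgσ : ContDiffAt ℂ 2 (g ∘ diskMobius (-z)) 0 :=
    ContDiffAt.comp (g := g) 0 (by rwa [diskMobius_neg_zero]) hσ
  rw [diskRecenter, iteratedDeriv_two_diskMobius_comp hgσ (by simp) hw,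
    iteratedDeriv_two_comp_diskMobius_neg_zero hg,
    deriv_comp_diskMobius_neg_zero (hg.differentiableAt two_ne_zero), ofReal_pow,
    ← one_sub_conj_mul_self, ← one_sub_conj_mul_self]
  have hA := one_sub_conj_mul_ne_zero hz hz
  have hB := one_sub_conj_mul_ne_zero hw hw
  field_simp
  ring

end Recenter

section SchwarzPick

variable {f : ℂ → ℂ}

theorem norm_deriv_le_one_sub_sq_of_mapsTo_ball (hd : DifferentiableOn ℂ f (ball 0 1))
    (hm : MapsTo f (ball 0 1) (ball 0 1)) : ‖deriv f 0‖ ≤ 1 - ‖f 0‖ ^ 2 := by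
  have h0 : ball (0 : ℂ) 1 ∈ 𝓝 0 := ball_mem_nhds _ one_pos
  have ha : ‖f 0‖ < 1 := mem_ball_zero_iff.mp (hm (mem_of_mem_nhds h0))
  have hpos : 0 < 1 - ‖f 0‖ ^ 2 := by nlinarith [norm_nonneg (f 0)]
  have hschwarz := norm_deriv_le_one_of_mapsTo_ball ((differentiableOn_diskMobius ha).comp hd hm)
    (by simpa using ((mapsTo_diskMobius ha).comp hm).mono_right ball_subset_closedBall) one_pos
  rwa [deriv_diskMobius_comp (hd.differentiableAt h0) rfl ha, one_sub_conj_mul_self, norm_div,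
    norm_real, Real.norm_of_nonneg hpos.le, div_le_one hpos] at hschwarz

theorem norm_deriv_le_one_sub_sq_of_mapsTo_closedBall (hd : DifferentiableOn ℂ f (ball 0 1))
    (hm : MapsTo f (ball 0 1) (closedBall 0 1)) : ‖deriv f 0‖ ≤ 1 - ‖f 0‖ ^ 2 := by
  by_cases hopen : MapsTo f (ball 0 1) (ball 0 1)
  · exact norm_deriv_le_one_sub_sq_of_mapsTo_ball hd hopen
  obtain ⟨u, hu, hfu⟩ : ∃ u ∈ ball (0 : ℂ) 1, ‖f u‖ = 1 := by
    simp only [MapsTo, not_forall, exists_prop] at hopen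
    obtain ⟨u, hu, hfu⟩ := hopen
    exact ⟨u, hu, le_antisymm (mem_closedBall_zero_iff.mp (hm hu))
      (not_lt.mp (mt mem_ball_zero_iff.mpr hfu))⟩
  -- maximum modulus: `‖f‖` attains its supremum `1` inside the disk
  have hconst : EqOn f (Function.const ℂ (f u)) (ball 0 1) :=
    eqOn_of_isPreconnected_of_isMaxOn_norm (convex_ball 0 1).isPreconnected isOpen_ball hd hu
      fun v hv => by simpa [hfu] using hm hv
  have hderiv : deriv f 0 = 0 := by
    rw [(hconst.eventuallyEq_of_mem (ball_mem_nhds 0 one_pos)).deriv_eq]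
    exact deriv_const 0 (f u)
  rw [hderiv, hconst (mem_ball_self one_pos), Function.const_apply, hfu]
  norm_num

end SchwarzPick

theorem deriv_dslope_self {𝕜 : Type*} [NontriviallyNormedField 𝕜] [CompleteSpace 𝕜]
    [CharZero 𝕜] {f : 𝕜 → 𝕜} {a : 𝕜} (hf : AnalyticAt 𝕜 f a) :
    deriv (dslope f a) a = iteratedDeriv 2 f a / 2 := by
  rw [hf.hasFPowerSeriesAt.has_fpower_series_dslope_fslope.deriv]
  change FormalMultilinearSeries.coeff _ 1 = _
  rw [FormalMultilinearSeries.coeff_fslope, FormalMultilinearSeries.coeff_ofScalars]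
  norm_num

theorem norm_iteratedDeriv_two_le_of_mapsTo_ball {H : ℂ → ℂ}
    (hd : DifferentiableOn ℂ H (ball 0 1)) (hm : MapsTo H (ball 0 1) (ball 0 1)) (h0 : H 0 = 0) :
    ‖iteratedDeriv 2 H 0‖ / 2 ≤ 1 - ‖deriv H 0‖ ^ 2 := by
  have hnhds : ball (0 : ℂ) 1 ∈ 𝓝 0 := ball_mem_nhds _ one_pos
  have hφ := norm_deriv_le_one_sub_sq_of_mapsTo_closedBall (f := dslope H 0)
    ((differentiableOn_dslope hnhds).mpr hd) fun u hu => by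
      simpa using norm_dslope_le_div_of_mapsTo_ball hd
        (by simpa [h0] using hm.mono_right ball_subset_closedBall) hu
  rwa [dslope_same, deriv_dslope_self (hd.analyticAt hnhds), norm_div, Complex.norm_two] at hφ

/-- Bounds on the first two Peschl invariant derivatives of a holomorphic
self-map of the disk. -/
theorem peschl_bounds (g : ℂ → ℂ) (z : ℂ)
    (hg : DifferentiableOn ℂ g (Metric.ball (0:ℂ) 1))
    (hmap : Set.MapsTo g (Metric.ball (0:ℂ) 1) (Metric.ball (0:ℂ) 1))
    (hz : z ∈ Metric.ball (0:ℂ) 1)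
    (D1 D2 : ℂ)
    (hD1 : D1 = ((1 - ‖z‖ ^ 2 : ℝ) : ℂ) * deriv g z /
      ((1 - ‖g z‖ ^ 2 : ℝ) : ℂ))
    (hD2 : D2 = (((1 - ‖z‖ ^ 2) ^ 2 : ℝ) : ℂ) /
        ((1 - ‖g z‖ ^ 2 : ℝ) : ℂ) *
      (iteratedDeriv 2 g z
        - 2 * (starRingEnd ℂ) z * deriv g z / ((1 - ‖z‖ ^ 2 : ℝ) : ℂ)
        + 2 * (starRingEnd ℂ) (g z) * (deriv g z) ^ 2 /
            ((1 - ‖g z‖ ^ 2 : ℝ) : ℂ))) :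
    ‖D1‖ ≤ 1 ∧ ‖D2‖ / 2 ≤ 1 - ‖D1‖ ^ 2 := by
  have hzn : ‖z‖ < 1 := mem_ball_zero_iff.mp hz
  have hw : ‖g z‖ < 1 := mem_ball_zero_iff.mp (hmap hz)
  have hga : AnalyticAt ℂ g z := hg.analyticAt (isOpen_ball.mem_nhds hz)
  have hHd := differentiableOn_diskRecenter hg hmap hzn
  have hHm := mapsTo_diskRecenter hmap hzn
  rw [hD1, hD2, ← deriv_diskRecenter_zero hga.differentiableAt hw,
    ← iteratedDeriv_two_diskRecenter_zero hga.contDiffAt hzn hw]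
  exact ⟨norm_deriv_le_one_of_mapsTo_ball hHd
      (by simpa using hHm.mono_right ball_subset_closedBall) one_pos,
    norm_iteratedDeriv_two_le_of_mapsTo_ball hHd hHm diskRecenter_zero⟩
end
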